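/- arXiv:2108.05568 — 3 statements merged into one kernel-verified Lean document; each statement's English description precedes it below -/
import Mathlib

section
/- Monotonicity between reward and fee: If the two IC constraints between types θ_i and θ_j hold with 0 < θ_j < θ_i, then R_i ≥ R_j implies f_i ≥ f_j, and f_i > f_j implies R_i > R_j. -/
/-!
Each IC constraint bounds the fee difference by the difference of squared rewards:
`θj² (Ri² - Rj²) / (2c) ≤ fi - fj ≤ θi² (Ri² - Rj²) / (2c)`.
The lower bound (from the low type's constraint) gives the first implication, the upper bound
(from the high type's constraint) the second; since rewards are positive, comparing `R²` is
comparing `R`.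
-/

lemma fee_sub_le_of_ic {θ R R' f f' c : ℝ}
    (h : (θ * R') ^ 2 / (2 * c) - f' ≤ (θ * R) ^ 2 / (2 * c) - f) :
    f - f' ≤ θ ^ 2 * (R ^ 2 - R' ^ 2) / (2 * c) := by
  have hdiff : (θ * R) ^ 2 / (2 * c) - (θ * R') ^ 2 / (2 * c)
      = θ ^ 2 * (R ^ 2 - R' ^ 2) / (2 * c) := by ring
  linarith

lemma sq_mul_div_nonpos (θ : ℝ) {x c : ℝ} (hx : x ≤ 0) (hc : 0 ≤ c) :
    θ ^ 2 * x / (2 * c) ≤ 0 :=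
  div_nonpos_of_nonpos_of_nonneg (mul_nonpos_of_nonneg_of_nonpos (sq_nonneg θ) hx) (by positivity)

theorem reward_fee_monotone_general (θi θj Ri Rj fi fj c : ℝ)
    (hRi : 0 < Ri) (hRj : 0 < Rj) (hc : 0 < c)
    (hICi : (θi * Ri) ^ 2 / (2 * c) - fi ≥ (θi * Rj) ^ 2 / (2 * c) - fj)
    (hICj : (θj * Rj) ^ 2 / (2 * c) - fj ≥ (θj * Ri) ^ 2 / (2 * c) - fi) :
    (Ri ≥ Rj → fi ≥ fj) ∧ (fi > fj → Ri > Rj) := by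
  have upper := fee_sub_le_of_ic hICi
  have lower := fee_sub_le_of_ic hICj
  constructor
  · intro hR
    have hsq : Rj ^ 2 ≤ Ri ^ 2 := pow_le_pow_left₀ hRj.le hR 2
    linarith [sq_mul_div_nonpos θj (sub_nonpos.2 hsq) hc.le]
  · intro hf
    have hsq : Rj ^ 2 < Ri ^ 2 := by
      by_contra! h
      linarith [sq_mul_div_nonpos θi (sub_nonpos.2 h) hc.le]
    exact lt_of_pow_lt_pow_left₀ 2 hRi.le hsq

/-- Monotonicity between reward and fee under the two IC constraints. -/
theorem reward_fee_monotone (θi θj Ri Rj fi fj c : ℝ)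
    (hθj : 0 < θj) (hθ : θj < θi) (hRi : 0 < Ri) (hRj : 0 < Rj) (hc : 0 < c)
    (hICi : (θi * Ri) ^ 2 / (2 * c) - fi ≥ (θi * Rj) ^ 2 / (2 * c) - fj)
    (hICj : (θj * Rj) ^ 2 / (2 * c) - fj ≥ (θj * Ri) ^ 2 / (2 * c) - fi) :
    (Ri ≥ Rj → fi ≥ fj) ∧ (fi > fj → Ri > Rj) :=
  reward_fee_monotone_general θi θj Ri Rj fi fj c hRi hRj hc hICi hICj
end

section
/- Downward IC transitivity: If the adjacent downward IC constraints (θ_{k+1} R_{k+1})²/(2c) − f_{k+1} ≥ (θ_{k+1} R_k)²/(2c) − f_k hold for all k, types are ascending (θ_1 ≤ … ≤ θ_I, all positive), and rewards are nondecreasing (R_1 ≤ … ≤ R_I, all positive), then for every i > j the downward IC constraint (θ_i R_i)²/(2c) − f_i ≥ (θ_i R_j)²/(2c) − f_j holds. -/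
/-!
The gain `θ² (R_{k+1}² − R_k²) / (2c) − (f_{k+1} − f_k)` from the contract of type `k + 1` over
that of type `k` is nondecreasing in `θ` because `R_k ≤ R_{k+1}` (single crossing). So the adjacent
constraint of type `k + 1` also holds for every higher type `i`, and chaining these steps from `j`
up to `i` gives the constraint between `i` and `j`.
-/

/-- Utility of type `t` when it takes the contract `(R k, f k)` designed for type `k`. -/
noncomputable def contractUtility (θ R f : ℕ → ℝ) (c : ℝ) (t k : ℕ) : ℝ :=
  (θ t * R k) ^ 2 / (2 * c) - f k

lemma sq_mul_div_sub_sq_mul_div_le {a b x y c : ℝ} (hc : 0 ≤ c) (ha : 0 ≤ a) (hab : a ≤ b)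
    (hx : 0 ≤ x) (hxy : x ≤ y) :
    (a * y) ^ 2 / c - (a * x) ^ 2 / c ≤ (b * y) ^ 2 / c - (b * x) ^ 2 / c := by
  have hsq_ab : a ^ 2 ≤ b ^ 2 := pow_le_pow_left₀ ha hab 2
  have hsq_xy : x ^ 2 ≤ y ^ 2 := pow_le_pow_left₀ hx hxy 2
  have hgap : (b * y) ^ 2 / c - (b * x) ^ 2 / c - ((a * y) ^ 2 / c - (a * x) ^ 2 / c) =
      (b ^ 2 - a ^ 2) * (y ^ 2 - x ^ 2) / c := by
    ring
  have : 0 ≤ (b ^ 2 - a ^ 2) * (y ^ 2 - x ^ 2) / c :=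
    div_nonneg (mul_nonneg (sub_nonneg.2 hsq_ab) (sub_nonneg.2 hsq_xy)) hc
  linarith

section

variable {θ R f : ℕ → ℝ} {c : ℝ}

lemma contractUtility_le_succ_of_le (hc : 0 < c) (hθpos : ∀ i, 0 < θ i) (hθmono : Monotone θ)
    (hRpos : ∀ i, 0 < R i) (hRmono : Monotone R)
    (hadj : ∀ k, contractUtility θ R f c (k + 1) k ≤ contractUtility θ R f c (k + 1) (k + 1))
    {k t : ℕ} (hkt : k + 1 ≤ t) :
    contractUtility θ R f c t k ≤ contractUtility θ R f c t (k + 1) := by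
  have hcross := sq_mul_div_sub_sq_mul_div_le (by positivity : 0 ≤ 2 * c) (hθpos (k + 1)).le
    (hθmono hkt) (hRpos k).le (hRmono k.le_succ)
  have hadj_k := hadj k
  unfold contractUtility at *
  linarith

lemma contractUtility_le_of_le (hc : 0 < c) (hθpos : ∀ i, 0 < θ i) (hθmono : Monotone θ)
    (hRpos : ∀ i, 0 < R i) (hRmono : Monotone R)
    (hadj : ∀ k, contractUtility θ R f c (k + 1) k ≤ contractUtility θ R f c (k + 1) (k + 1))
    {i j : ℕ} (hji : j ≤ i) :
    contractUtility θ R f c i j ≤ contractUtility θ R f c i i := by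
  refine monotoneOn_of_le_succ Set.ordConnected_Iic (fun k _ _ hk ↦ ?_) hji le_rfl hji
  rw [Order.succ_eq_add_one] at hk ⊢
  exact contractUtility_le_succ_of_le hc hθpos hθmono hRpos hRmono hadj hk

end

/-- Downward IC transitivity: adjacent downward IC constraints, ascending types,
and nondecreasing rewards imply all downward IC constraints. -/
theorem downward_IC_transitivity (θ R f : ℕ → ℝ) (c : ℝ) (hc : 0 < c)
    (hθpos : ∀ i, 0 < θ i) (hθmono : Monotone θ)
    (hRpos : ∀ i, 0 < R i) (hRmono : Monotone R)
    (hadj : ∀ k, (θ (k + 1) * R (k + 1)) ^ 2 / (2 * c) - f (k + 1) ≥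
      (θ (k + 1) * R k) ^ 2 / (2 * c) - f k) :
    ∀ i j, j < i →
      (θ i * R i) ^ 2 / (2 * c) - f i ≥ (θ i * R j) ^ 2 / (2 * c) - f j :=
  fun _ _ hji ↦ contractUtility_le_of_le hc hθpos hθmono hRpos hRmono hadj hji.le
end

section
/- The contract menu defined by R_i = G(M_i), f_1 = (θ_1 R_1)²/(2c), and f_i = (θ_i R_i)²/(2c) − (θ_i R_{i−1})²/(2c) + f_{i−1} for i ≥ 2 satisfies, when R_1 ≤ R_2 ≤ … ≤ R_I and 0 < θ_1 < θ_2 < … < θ_I, all IR constraints (θ_i R_i)²/(2c) − f_i ≥ 0 and all IC constraints (θ_i R_i)²/(2c) − f_i ≥ (θ_i R_j)²/(2c) − f_j for every i, j. -/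
/-!
Let `u i j = menuUtility θ R f c i j` be the utility of type `i` choosing the contract
`(R j, f j)`. The fee recursion makes
`u i (j + 1) - u i j = (θ i ^ 2 - θ (j + 1) ^ 2) (R (j + 1) ^ 2 - R j ^ 2) / (2c)`, and since `R`
is nondecreasing and `θ` positive, the sign of this increment is that of `θ i - θ (j + 1)`. So
`j ↦ u i j` climbs up to `j = i` and descends afterwards, which is IC. The same identity at
`i = j + 1` says type `j + 1` is indifferent between contracts `j` and `j + 1`, so
`u (j + 1) (j + 1) = u (j + 1) j ≥ u j j`, and IR follows by induction from `u 0 0 = 0`.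
-/

theorem Nat.le_of_le_succ_of_succ_le {α : Type*} [Preorder α] {g : ℕ → α} {i : ℕ}
    (hup : ∀ n < i, g n ≤ g (n + 1)) (hdown : ∀ n ≥ i, g (n + 1) ≤ g n) (j : ℕ) :
    g j ≤ g i := by
  rcases le_total j i with hji | hij
  · refine monotoneOn_of_le_succ Set.ordConnected_Iic (fun n _ _ hn => ?_) hji le_rfl hji
    simpa using hup n (Order.succ_le_iff.mp hn)
  · exact antitoneOn_nat_Ici_of_succ_le hdown (le_refl i) hij hij

noncomputable def menuUtility (θ R f : ℕ → ℝ) (c : ℝ) (i j : ℕ) : ℝ :=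
  (θ i * R j) ^ 2 / (2 * c) - f j

section
variable {θ R f : ℕ → ℝ} {c : ℝ}

theorem menuUtility_succ_sub
    (hfrec : ∀ i, f (i + 1) =
      (θ (i + 1) * R (i + 1)) ^ 2 / (2 * c) - (θ (i + 1) * R i) ^ 2 / (2 * c) + f i)
    (i j : ℕ) :
    menuUtility θ R f c i (j + 1) - menuUtility θ R f c i j =
      (θ i ^ 2 - θ (j + 1) ^ 2) * (R (j + 1) ^ 2 - R j ^ 2) / (2 * c) := by
  simp only [menuUtility, hfrec j]
  ring

theorem menuUtility_le_self (hc : 0 ≤ c) (hθ : ∀ i, 0 ≤ θ i) (hθmono : Monotone θ)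
    (hR : ∀ i, 0 ≤ R i) (hRmono : Monotone R)
    (hfrec : ∀ i, f (i + 1) =
      (θ (i + 1) * R (i + 1)) ^ 2 / (2 * c) - (θ (i + 1) * R i) ^ 2 / (2 * c) + f i)
    (i j : ℕ) :
    menuUtility θ R f c i j ≤ menuUtility θ R f c i i := by
  have hRsq (n : ℕ) : 0 ≤ R (n + 1) ^ 2 - R n ^ 2 :=
    sub_nonneg.mpr (pow_le_pow_left₀ (hR n) (hRmono n.le_succ) 2)
  refine Nat.le_of_le_succ_of_succ_le (fun n hn => ?_) (fun n hn => ?_) j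
  · have hθsq : θ (n + 1) ^ 2 ≤ θ i ^ 2 := pow_le_pow_left₀ (hθ _) (hθmono hn) 2
    have := menuUtility_succ_sub hfrec i n
    have : 0 ≤ (θ i ^ 2 - θ (n + 1) ^ 2) * (R (n + 1) ^ 2 - R n ^ 2) / (2 * c) :=
      div_nonneg (mul_nonneg (sub_nonneg.mpr hθsq) (hRsq n)) (by positivity)
    linarith
  · have hθsq : θ i ^ 2 ≤ θ (n + 1) ^ 2 := pow_le_pow_left₀ (hθ _) (hθmono (by omega)) 2
    have := menuUtility_succ_sub hfrec i n
    have : (θ i ^ 2 - θ (n + 1) ^ 2) * (R (n + 1) ^ 2 - R n ^ 2) / (2 * c) ≤ 0 :=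
      div_nonpos_of_nonpos_of_nonneg
        (mul_nonpos_of_nonpos_of_nonneg (sub_nonpos.mpr hθsq) (hRsq n)) (by positivity)
    linarith

theorem menuUtility_self_nonneg (hc : 0 ≤ c) (hθ : ∀ i, 0 ≤ θ i) (hθmono : Monotone θ)
    (hf0 : f 0 = (θ 0 * R 0) ^ 2 / (2 * c))
    (hfrec : ∀ i, f (i + 1) =
      (θ (i + 1) * R (i + 1)) ^ 2 / (2 * c) - (θ (i + 1) * R i) ^ 2 / (2 * c) + f i)
    (i : ℕ) :
    0 ≤ menuUtility θ R f c i i := by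
  induction i with
  | zero => simp [menuUtility, hf0]
  | succ i ih =>
    have hindiff : menuUtility θ R f c (i + 1) (i + 1) = menuUtility θ R f c (i + 1) i :=
      sub_eq_zero.mp (by simpa using menuUtility_succ_sub hfrec (i + 1) i)
    have hgain : menuUtility θ R f c i i ≤ menuUtility θ R f c (i + 1) i := by
      have hθsq : θ i ^ 2 ≤ θ (i + 1) ^ 2 := pow_le_pow_left₀ (hθ i) (hθmono i.le_succ) 2
      simp only [menuUtility, mul_pow]
      gcongr
    linarith

end

theorem optimal_menu_IR_IC_general (θ R f : ℕ → ℝ) (c : ℝ) (hc : 0 < c)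
    (hθpos : ∀ i, 0 < θ i) (hθmono : StrictMono θ)
    (hRpos : ∀ i, 0 < R i) (hRmono : Monotone R)
    (hf0 : f 0 = (θ 0 * R 0) ^ 2 / (2 * c))
    (hfrec : ∀ i, f (i + 1) =
      (θ (i + 1) * R (i + 1)) ^ 2 / (2 * c) - (θ (i + 1) * R i) ^ 2 / (2 * c) + f i) :
    (∀ i, (θ i * R i) ^ 2 / (2 * c) - f i ≥ 0) ∧
      (∀ i j, (θ i * R i) ^ 2 / (2 * c) - f i ≥ (θ i * R j) ^ 2 / (2 * c) - f j) :=
  ⟨menuUtility_self_nonneg hc.le (fun i => (hθpos i).le) hθmono.monotone hf0 hfrec,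
    menuUtility_le_self hc.le (fun i => (hθpos i).le) hθmono.monotone (fun i => (hRpos i).le)
      hRmono hfrec⟩

/-- The optimal contract menu `R i = G (M i)` with recursively defined fees
satisfies all IR and IC constraints. -/
theorem optimal_menu_IR_IC (θ R f M : ℕ → ℝ) (G : ℝ → ℝ) (c : ℝ) (hc : 0 < c)
    (hθpos : ∀ i, 0 < θ i) (hθmono : StrictMono θ)
    (hR : ∀ i, R i = G (M i)) (hRpos : ∀ i, 0 < R i) (hRmono : Monotone R)
    (hf0 : f 0 = (θ 0 * R 0) ^ 2 / (2 * c))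
    (hfrec : ∀ i, f (i + 1) =
      (θ (i + 1) * R (i + 1)) ^ 2 / (2 * c) - (θ (i + 1) * R i) ^ 2 / (2 * c) + f i) :
    (∀ i, (θ i * R i) ^ 2 / (2 * c) - f i ≥ 0) ∧
      (∀ i j, (θ i * R i) ^ 2 / (2 * c) - f i ≥ (θ i * R j) ^ 2 / (2 * c) - f j) :=
  optimal_menu_IR_IC_general θ R f c hc hθpos hθmono hRpos hRmono hf0 hfrec
end
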